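/- arXiv:1711.03096 — 4 statements merged into one kernel-verified Lean document; each statement's English description precedes it below -/
import Mathlib

section
/- Let T be a finite set of non-negative integers with 0 ∈ T, r = max T, and σ = r − |T| + 1. If σ < n, then there exists an L(t,1)-colouring of the star K_{1,n} whose largest assigned colour is exactly r + (n − σ): the colouring assigns 0 to the central vertex, assigns the σ integers in {0,...,r} that are missing from T to σ of the pendant vertices, and assigns the colours r + 1, r + 2, ..., r + (n − σ) to the remaining pendant vertices. -/
/-- An L(t,1)-colouring of `G` with respect to the set `T` (a finite set of
non-negative integers containing 0): adjacent vertices get colours whose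
difference is not in `T`, and vertices at distance exactly 2 get distinct
colours. -/
def IsLt1Coloring {V : Type*} (G : SimpleGraph V) (T : Finset ℕ) (c : V → ℕ) : Prop :=
  (∀ u v : V, G.Adj u v → ((c u : ℤ) - (c v : ℤ)).natAbs ∉ T) ∧
  (∀ u v : V, G.dist u v = 2 → c u ≠ c v)

/-- The c-span of a colouring: the maximum of |c(u) - c(v)| over all pairs of vertices. -/
def cSpan {V : Type*} [Fintype V] (c : V → ℕ) : ℕ :=
  Finset.univ.sup (fun p : V × V => ((c p.1 : ℤ) - (c p.2 : ℤ)).natAbs)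

/-- The L(t,1)-span of `G` with respect to `T`: the minimum c-span over all
L(t,1)-colourings of `G`. -/
noncomputable def lt1Span {V : Type*} [Fintype V] (G : SimpleGraph V) (T : Finset ℕ) : ℕ :=
  sInf { m | ∃ c : V → ℕ, IsLt1Coloring G T c ∧ cSpan c = m }

/-- If `σ < n` then there is an L(t,1)-colouring of the star
`K_{1,n}` with largest colour exactly `r + (n - σ)`: the centre gets 0, the σ
missing colours of `{0,...,r}` go (injectively) to σ pendant vertices, and the
colours `r+1, ..., r+(n-σ)` go to the remaining pendant vertices. -/
theorem star_coloring_exists (n : ℕ) (T : Finset ℕ) (hT : 0 ∈ T)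
    (r : ℕ) (hr : r ∈ T ∧ ∀ x ∈ T, x ≤ r)
    (hσ : (Finset.range (r + 1) \ T).card < n) :
    ∃ c : Unit ⊕ Fin n → ℕ,
      IsLt1Coloring (completeBipartiteGraph Unit (Fin n)) T c ∧
      c (Sum.inl ()) = 0 ∧
      Function.Injective (fun i : Fin n => c (Sum.inr i)) ∧
      Finset.univ.image (fun i : Fin n => c (Sum.inr i)) =
        (Finset.range (r + 1) \ T) ∪
          Finset.Icc (r + 1) (r + (n - (Finset.range (r + 1) \ T).card)) ∧
      Finset.univ.sup c = r + (n - (Finset.range (r + 1) \ T).card) := by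
  set σ := (Finset.range (r + 1) \ T).card with hσdef
  set M := r + (n - σ) with hM
  set S : Finset ℕ := (Finset.range (r + 1) \ T) ∪ Finset.Icc (r + 1) M with hS
  have hdisj : Disjoint (Finset.range (r + 1) \ T) (Finset.Icc (r + 1) M) := by
    rw [Finset.disjoint_left]
    intro x hx hx'
    have h1 := (Finset.mem_sdiff.mp hx).1
    rw [Finset.mem_range] at h1
    have h2 := (Finset.mem_Icc.mp hx').1
    omega
  have hcard : S.card = n := by
    rw [hS, Finset.card_union_of_disjoint hdisj, Nat.card_Icc]
    omega
  have hmemS : ∀ x ∈ S, x ∉ T ∧ x ≤ M := by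
    intro x hx
    rcases Finset.mem_union.mp hx with h | h
    · obtain ⟨h1, h2⟩ := Finset.mem_sdiff.mp h
      rw [Finset.mem_range] at h1
      exact ⟨h2, by omega⟩
    · obtain ⟨h1, h2⟩ := Finset.mem_Icc.mp h
      refine ⟨fun hxT => ?_, h2⟩
      have := hr.2 x hxT
      omega
  have hMS : M ∈ S := by
    apply Finset.mem_union_right
    rw [Finset.mem_Icc]
    omega
  let e := S.orderIsoOfFin hcard
  refine ⟨Sum.elim (fun _ => 0) (fun i => (e i : ℕ)), ⟨?_, ?_⟩, rfl, ?_, ?_, ?_⟩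
  · rintro (⟨⟩ | u) (⟨⟩ | v) hadj
    · simp at hadj
    · simpa using (hmemS _ (e v).2).1
    · simpa using (hmemS _ (e u).2).1
    · simp at hadj
  · rintro (⟨⟩ | u) (⟨⟩ | v) hdist
    · simp [SimpleGraph.dist_self] at hdist
    · have h1 : (completeBipartiteGraph Unit (Fin n)).dist (Sum.inl ()) (Sum.inr v) = 1 :=
        SimpleGraph.dist_eq_one_iff_adj.mpr (by simp)
      rw [h1] at hdist
      exact absurd hdist (by norm_num)
    · have h1 : (completeBipartiteGraph Unit (Fin n)).dist (Sum.inr u) (Sum.inl ()) = 1 :=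
        SimpleGraph.dist_eq_one_iff_adj.mpr (by simp)
      rw [h1] at hdist
      exact absurd hdist (by norm_num)
    · intro h
      have huv : u = v := e.injective (Subtype.ext h)
      subst huv
      simp [SimpleGraph.dist_self] at hdist
  · intro i j h
    exact e.injective (Subtype.ext h)
  · ext x
    simp only [Finset.mem_image, Finset.mem_univ, true_and]
    constructor
    · rintro ⟨i, rfl⟩
      exact (e i).2
    · intro hx
      exact ⟨e.symm ⟨x, hx⟩, by simp⟩
  · apply le_antisymm
    · apply Finset.sup_le
      rintro (u | u) _
      · simp
      · exact (hmemS _ (e u).2).2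
    · have h2 : (Sum.elim (fun _ => 0) (fun i => ((e i : ℕ))) : Unit ⊕ Fin n → ℕ)
          (Sum.inr (e.symm ⟨M, hMS⟩)) = M := by simp
      calc M = _ := h2.symm
        _ ≤ _ := Finset.le_sup (Finset.mem_univ _)
end

section
/- Let T be a finite set of non-negative integers with 0 ∈ T, r = max T, and σ = r − |T| + 1. If σ ≥ n ≥ 1, then the L(t,1)-span of the star K_{1,n} satisfies λ_{t,1}(K_{1,n}) < r. -/
/-- If `σ ≥ n ≥ 1`, where `σ = (Finset.range (r+1) \ T).card` is
the number of integers in `{0,...,r}` missing from `T` and `r = max T`, then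
the L(t,1)-span of the star `K_{1,n}` is strictly less than `r`. -/
theorem star_span_lt_r (n : ℕ) (hn : 1 ≤ n) (T : Finset ℕ) (hT : 0 ∈ T)
    (r : ℕ) (hr : r ∈ T ∧ ∀ x ∈ T, x ≤ r)
    (hσ : n ≤ (Finset.range (r + 1) \ T).card) :
    lt1Span (completeBipartiteGraph Unit (Fin n)) T < r := by
  set S := Finset.range (r + 1) \ T with hS
  let f : Fin n → ℕ := fun i => ((S.orderIsoOfFin rfl) (Fin.castLE hσ i) : ℕ)
  have hfS : ∀ i, f i ∈ S := fun i => ((S.orderIsoOfFin rfl) (Fin.castLE hσ i)).2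
  have hfinj : Function.Injective f := by
    intro i j h
    have h2 : (S.orderIsoOfFin rfl) (Fin.castLE hσ i) = (S.orderIsoOfFin rfl) (Fin.castLE hσ j) :=
      Subtype.ext h
    have := (S.orderIsoOfFin rfl).injective h2
    exact Fin.castLE_injective hσ this
  have hfnotT : ∀ i, f i ∉ T := fun i => (Finset.mem_sdiff.mp (hfS i)).2
  have hfle : ∀ i, f i ≤ r := fun i =>
    Nat.lt_succ_iff.mp (Finset.mem_range.mp (Finset.mem_sdiff.mp (hfS i)).1)
  have hfne_r : ∀ i, f i ≠ r := fun i h => hfnotT i (h ▸ hr.1)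
  have hfle' : ∀ i, f i ≤ r - 1 := fun i => by
    have h1 := hfle i; have h2 := hfne_r i; omega
  have hfne0 : ∀ i, f i ≠ 0 := fun i h => hfnotT i (h ▸ hT)
  have hr1 : 1 ≤ r := by
    have h1 := hfle ⟨0, hn⟩
    have h2 := hfne0 ⟨0, hn⟩
    omega
  set c : Unit ⊕ Fin n → ℕ := Sum.elim (fun _ => 0) f with hc
  have hcol : IsLt1Coloring (completeBipartiteGraph Unit (Fin n)) T c := by
    constructor
    · rintro (u | i) (v | j) hadj
      · simp at hadj
      · simpa [hc] using hfnotT j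
      · simpa [hc] using hfnotT i
      · simp at hadj
    · rintro (u | i) (v | j) hd
      · rw [show (Sum.inl u : Unit ⊕ Fin n) = Sum.inl v from rfl,
          SimpleGraph.dist_self] at hd
        exact absurd hd (by norm_num)
      · have hadj : (completeBipartiteGraph Unit (Fin n)).Adj (Sum.inl u) (Sum.inr j) := by
          simp
        have := SimpleGraph.dist_le hadj.toWalk
        simp at this
        omega
      · have hadj : (completeBipartiteGraph Unit (Fin n)).Adj (Sum.inr i) (Sum.inl v) := by
          simp
        have := SimpleGraph.dist_le hadj.toWalk
        simp at this
        omega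
      · rcases eq_or_ne i j with h | h
        · subst h
          rw [SimpleGraph.dist_self] at hd
          exact absurd hd (by norm_num)
        · simpa [hc] using fun he => h (hfinj he)
  have hspan : cSpan c ≤ r - 1 := by
    apply Finset.sup_le
    rintro ⟨(u | i), (v | j)⟩ -
    · simp [hc]
    · have := hfle' j
      simp only [hc, Sum.elim_inl, Sum.elim_inr]
      omega
    · have := hfle' i
      simp only [hc, Sum.elim_inl, Sum.elim_inr]
      omega
    · have h1 := hfle' i
      have h2 := hfle' j
      simp only [hc, Sum.elim_inr]
      omega
  have hle : lt1Span (completeBipartiteGraph Unit (Fin n)) T ≤ cSpan c :=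
    Nat.sInf_le ⟨c, hcol, rfl⟩
  omega
end

section
/- Let T be a finite set of non-negative integers with 0 ∈ T and r = max T. For any complete k-partite graph G = K_{m_1, m_2, ..., m_k} with k ≥ 2 and nonempty partite sets m_1, ..., m_k, the L(t,1)-span of G satisfies λ_{t,1}(G) ≤ r·k + Σ_{i=1}^{k} |m_i| − 1. -/
/-- For any complete k-partite graph with `k ≥ 2` nonempty parts
of sizes `m 0, ..., m (k-1)`, the L(t,1)-span is at most
`r * k + (∑ i, m i) - 1`, where `r = max T`. -/
theorem multipartite_span_upper_bound (T : Finset ℕ) (hT : 0 ∈ T)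
    (r : ℕ) (hr : r ∈ T ∧ ∀ x ∈ T, x ≤ r)
    (k : ℕ) (hk : 2 ≤ k) (m : Fin k → ℕ) (hm : ∀ i, 1 ≤ m i) :
    lt1Span (SimpleGraph.completeMultipartiteGraph (fun i : Fin k => Fin (m i))) T ≤
      r * k + (∑ i, m i) - 1 := by
  set G := SimpleGraph.completeMultipartiteGraph (fun i : Fin k => Fin (m i)) with hG
  set b : Fin k → ℕ := fun i => ∑ i' ∈ Finset.Iio i, (m i' + r) with hb
  set c : (Σ i : Fin k, Fin (m i)) → ℕ := fun v => b v.1 + v.2.val with hc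
  -- block growth
  have hsep : ∀ i i' : Fin k, i < i' → b i + m i + r ≤ b i' := by
    intro i i' hii
    have hsub : insert i (Finset.Iio i) ⊆ Finset.Iio i' := by
      intro x hx
      simp only [Finset.mem_insert, Finset.mem_Iio] at hx ⊢
      rcases hx with h | h
      · exact h ▸ hii
      · exact lt_trans h hii
    calc b i + m i + r = ∑ i'' ∈ insert i (Finset.Iio i), (m i'' + r) := by
          rw [Finset.sum_insert (by simp)]; ring
      _ ≤ b i' := Finset.sum_le_sum_of_subset hsub
  have hbound : ∀ v, c v ≤ r * k + (∑ i, m i) - 1 := by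
    intro ⟨i, j⟩
    have h1 : b i + m i + r ≤ ∑ i, (m i + r) := by
      calc b i + m i + r = ∑ i'' ∈ insert i (Finset.Iio i), (m i'' + r) := by
            rw [Finset.sum_insert (by simp)]; ring
        _ ≤ ∑ i, (m i + r) := Finset.sum_le_sum_of_subset (Finset.subset_univ _)
    have h2 : ∑ i, (m i + r) = (∑ i, m i) + r * k := by
      rw [Finset.sum_add_distrib, Finset.sum_const, Finset.card_univ, Fintype.card_fin,
        smul_eq_mul, mul_comm]
    have hj : (j : ℕ) < m i := j.isLt
    simp only [hc]
    omega
  have hcol : IsLt1Coloring G T c := by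
    constructor
    · intro u v huv hmem
      have hadj : u.1 ≠ v.1 := huv
      have hle := hr.2 _ hmem
      have key : ∀ p q : (Σ i : Fin k, Fin (m i)), p.1 < q.1 → c p + r < c q := by
        intro p q hpq
        have h1 := hsep p.1 q.1 hpq
        have h2 : (p.2 : ℕ) < m p.1 := p.2.isLt
        simp only [hc]
        omega
      rcases lt_or_gt_of_ne hadj with h | h
      · have := key u v h; omega
      · have := key v u h; omega
    · intro u v hd hcv
      have hne : u.1 = v.1 := by
        by_contra hne
        have hadj : G.Adj u v := hne
        have := SimpleGraph.dist_le hadj.toWalk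
        simp at this
        omega
      obtain ⟨i, j⟩ := u
      obtain ⟨i', j'⟩ := v
      simp only at hne
      subst hne
      simp only [hc] at hcv
      have : j = j' := Fin.ext (by omega)
      subst this
      rw [SimpleGraph.dist_self] at hd
      omega
  have hspan : cSpan c ≤ r * k + (∑ i, m i) - 1 := by
    apply Finset.sup_le
    intro p _
    have h1 := hbound p.1
    have h2 := hbound p.2
    omega
  exact le_trans (Nat.sInf_le ⟨c, hcol, rfl⟩) hspan
end

section
/- Let T be a finite set of non-negative integers with 0 ∈ T and r = max T. For any complete k-partite graph G = K_{m_1, m_2, ..., m_k} with k ≥ 2 and nonempty partite sets m_1, ..., m_k, there exists an L(t,1)-colouring of G whose largest assigned colour is at most r·k + Σ_{i=1}^{k} |m_i| − 1. -/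
/-- For any complete k-partite graph with `k ≥ 2` nonempty parts
of sizes `m 0, ..., m (k-1)`, there exists an L(t,1)-colouring whose largest
assigned colour is at most `r * k + (∑ i, m i) - 1`, where `r = max T`. -/
theorem multipartite_coloring_exists (T : Finset ℕ) (hT : 0 ∈ T)
    (r : ℕ) (hr : r ∈ T ∧ ∀ x ∈ T, x ≤ r)
    (k : ℕ) (hk : 2 ≤ k) (m : Fin k → ℕ) (hm : ∀ i, 1 ≤ m i) :
    ∃ c : (Σ i : Fin k, Fin (m i)) → ℕ,
      IsLt1Coloring (SimpleGraph.completeMultipartiteGraph (fun i : Fin k => Fin (m i))) T c ∧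
      Finset.univ.sup c ≤ r * k + (∑ i, m i) - 1 := by

  classical
  set S : Fin k → ℕ := fun i => ∑ j ∈ Finset.Iio i, m j with hS
  -- sum over Iic
  have hIic : ∀ i : Fin k, ∑ j ∈ Finset.Iic i, m j = S i + m i := by
    intro i
    rw [← Finset.Iio_insert, Finset.sum_insert (by simp)]
    ring
  have hsub : ∀ i j : Fin k, i < j → S i + m i ≤ S j := by
    intro i j hij
    rw [← hIic]
    apply Finset.sum_le_sum_of_subset
    intro x hx
    simp only [Finset.mem_Iic] at hx
    simp only [Finset.mem_Iio]
    exact lt_of_le_of_lt hx hij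
  have hbound : ∀ i : Fin k, S i + m i ≤ ∑ x, m x := by
    intro i
    rw [← hIic]
    exact Finset.sum_le_sum_of_subset (Finset.subset_univ _)
  set c : (Σ i : Fin k, Fin (m i)) → ℕ := fun v => r * v.1 + S v.1 + v.2 with hc
  have key : ∀ (i j : Fin k), i < j → ∀ (a : Fin (m i)) (b : Fin (m j)),
      r * i.val + S i + a.val + r < r * j.val + S j + b.val := by
    intro i j hij a b
    have h1 : (i.val + 1) ≤ j.val := hij
    have h2 : r * (i.val + 1) ≤ r * j.val := Nat.mul_le_mul_left r h1
    have h3 : r * (i.val + 1) = r * i.val + r := by ring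
    have h4 : S i + a.val < S j := lt_of_lt_of_le (by have := a.isLt; omega) (hsub i j hij)
    omega
  refine ⟨c, ⟨?_, ?_⟩, ?_⟩
  · intro u v hadj
    intro hmem
    have hle := hr.2 _ hmem
    obtain ⟨i, a⟩ := u
    obtain ⟨j, b⟩ := v
    have hne : i ≠ j := hadj
    rcases lt_or_gt_of_ne hne with h | h
    · have := key i j h a b
      simp only [hc] at hle ⊢
      omega
    · have := key j i h b a
      simp only [hc] at hle ⊢
      omega
  · intro u v hdist
    have hne : u ≠ v := by
      intro h; subst h
      simp [SimpleGraph.dist_self] at hdist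
    obtain ⟨i, a⟩ := u
    obtain ⟨j, b⟩ := v
    by_cases hij : i = j
    · subst hij
      have hab : a ≠ b := by
        intro h; exact hne (by rw [h])
      simp only [hc]
      have : a.val ≠ b.val := fun h => hab (Fin.ext h)
      omega
    · -- different parts: adjacent, so dist = 1, contradiction
      exfalso
      have hadj : (SimpleGraph.completeMultipartiteGraph (fun i : Fin k => Fin (m i))).Adj
          ⟨i, a⟩ ⟨j, b⟩ := hij
      rw [SimpleGraph.dist_eq_one_iff_adj.mpr hadj] at hdist
      omega
  · apply Finset.sup_le
    intro v _
    obtain ⟨i, a⟩ := v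
    have h1 : r * i.val ≤ r * k := Nat.mul_le_mul_left r (le_of_lt i.isLt)
    have h2 : S i + m i ≤ ∑ x, m x := hbound i
    have h3 : a.val < m i := a.isLt
    have h4 : 1 ≤ m i := hm i
    simp only [hc]
    omega
end
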